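/- (Key Lemma for the Quantum Lovász Local Lemma) Let Σ = (ρ; M_1,…,M_n) be a test on a finite-dimensional complex Hilbert space H, let 𝔼 = E_1,…,E_n be events with E_i defined by M_i for each i, and let x_1,…,x_n ∈ (0,1]. For each 1 ≤ i ≤ n set s_i = max{ j < i : NInd_{Σ,𝔼}(i|j) } (with s_i = 0 if no such j exists), and assume Pr_Σ[E_i] ≤ x_i · ∏_{j=s_i+1}^{i−1}(1 − x_j) for all 1 ≤ i ≤ n. Assume moreover that Pr_Σ[Ē_1,…,Ē_{i−1}] ≠ 0 for each 1 ≤ i ≤ n. Then for every 1 ≤ i ≤ n, Pr_Σ[E_i | Ē_1,…,Ē_{i−1}] ≤ x_i. -/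

import Mathlib

open Matrix Finset
open scoped ComplexOrder

/-- A quantum measurement on `ℂ^d`: a finite family of operators indexed by the
outcomes in `spec`, satisfying the completeness condition `∑ Mₘ† Mₘ = I`. -/
structure Measurement (d : ℕ) where
  spec : Finset ℕ
  op : ℕ → Matrix (Fin d) (Fin d) ℂ
  complete : ∑ m ∈ spec, (op m)ᴴ * op m = 1

/-- An event `{M ∈ A}`: a measurement together with a subset of its spectrum. -/
structure QEvent (d : ℕ) where
  meas : Measurement d
  A : Finset ℕ
  sub : A ⊆ meas.spec

/-- The super-operator defined by an event: `ρ ↦ ∑_{m ∈ A} Mₘ ρ Mₘ†`. -/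
noncomputable def QEvent.superop {d : ℕ} (E : QEvent d) (ρ : Matrix (Fin d) (Fin d) ℂ) :
    Matrix (Fin d) (Fin d) ℂ :=
  ∑ m ∈ E.A, E.meas.op m * ρ * (E.meas.op m)ᴴ

/-- The probability of a sequence of events in state `ρ`:
`Pr_ρ[E₁,…,E_k] = tr(𝓔_k(⋯𝓔₁(ρ)⋯))`. -/
noncomputable def PrSeq {d : ℕ} (ρ : Matrix (Fin d) (Fin d) ℂ) (Es : List (QEvent d)) : ℝ :=
  (Matrix.trace (Es.foldl (fun σ E => E.superop σ) ρ)).re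

/-- A density operator: positive semidefinite with trace one. -/
def IsDensityOp {d : ℕ} (ρ : Matrix (Fin d) (Fin d) ℂ) : Prop :=
  ρ.PosSemidef ∧ ρ.trace = 1

/-- A projective measurement: every operator is an orthogonal projection and
distinct operators are orthogonal. -/
def Measurement.IsProjective {d : ℕ} (M : Measurement d) : Prop :=
  (∀ m ∈ M.spec, (M.op m)ᴴ = M.op m ∧ M.op m * M.op m = M.op m) ∧
  ∀ m ∈ M.spec, ∀ m' ∈ M.spec, m ≠ m' → M.op m * M.op m' = 0

/-- The complete event `I_M = {M ∈ spec(M)}`. -/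
def completeEvent {d : ℕ} (M : Measurement d) : QEvent d :=
  ⟨M, M.spec, subset_rfl⟩

/-- The complement `Ē = {M ∈ spec(M) \ A}` of the event `E = {M ∈ A}`. -/
def QEvent.compl {d : ℕ} (E : QEvent d) : QEvent d :=
  ⟨E.meas, E.meas.spec \ E.A, Finset.sdiff_subset⟩

/-- Conditional probability `Pr_ρ[𝔽|𝔼] = Pr_ρ[𝔼,𝔽] / Pr_ρ[𝔼]`. -/
noncomputable def condPrSeq {d : ℕ} (ρ : Matrix (Fin d) (Fin d) ℂ) (Fs Es : List (QEvent d)) : ℝ :=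
  PrSeq ρ (Es ++ Fs) / PrSeq ρ Es

/-- The list of events realizing `Pr_Σ[𝔼_K]` in the test `Σ = (ρ; M₁,…,M_n)`:
all measurements `M₁,…,M_{max K}` are performed; at the indices `i ∈ K` the event
`E i` is used, while at the remaining indices the complete event `I_{M_i}` is used. -/
noncomputable def testList {d : ℕ} (n : ℕ) (Ms : ℕ → Measurement d) (E : ℕ → QEvent d)
    (K : Finset ℕ) : List (QEvent d) :=
  ((List.range' 1 n).filter (fun i => decide (∃ k ∈ K, i ≤ k))).map
    (fun i => if i ∈ K then E i else completeEvent (Ms i))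

/-- The probability `Pr_Σ[𝔼_K]` of the subsequence of events indexed by `K` in the
test `Σ = (ρ; M₁,…,M_n)`. -/
noncomputable def PrTest {d : ℕ} (ρ : Matrix (Fin d) (Fin d) ℂ) (n : ℕ)
    (Ms : ℕ → Measurement d) (E : ℕ → QEvent d) (K : Finset ℕ) : ℝ :=
  PrSeq ρ (testList n Ms E K)

/-- The conditional probability `Pr_Σ[𝔼_L | 𝔼_K]` in a test (for `K < L`, the
concatenation `𝔼_K,𝔼_L` is the subsequence indexed by `K ∪ L`). -/
noncomputable def condPrTest {d : ℕ} (ρ : Matrix (Fin d) (Fin d) ℂ) (n : ℕ)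
    (Ms : ℕ → Measurement d) (E : ℕ → QEvent d) (L K : Finset ℕ) : ℝ :=
  PrTest ρ n Ms E (K ∪ L) / PrTest ρ n Ms E K

/-- Independence `Ind_Σ(E_i | 𝔼_J; 𝔼_{K∖J})`: `Pr_Σ[E_i|𝔼_K] = Pr_Σ[E_i|𝔼_{K∖J}]`. -/
def IndTest {d : ℕ} (ρ : Matrix (Fin d) (Fin d) ℂ) (n : ℕ)
    (Ms : ℕ → Measurement d) (E : ℕ → QEvent d) (i : ℕ) (J K : Finset ℕ) : Prop :=
  condPrTest ρ n Ms E {i} K = condPrTest ρ n Ms E {i} (K \ J)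

/-- Negative independence `NInd_Σ(E_i | 𝔼_K)`: `Pr_Σ[E_i | Ē_K] = Pr_Σ[E_i]`,
where in the conditioning sequence every event of `𝔼_K` is replaced by its complement. -/
def NIndTest {d : ℕ} (ρ : Matrix (Fin d) (Fin d) ℂ) (n : ℕ)
    (Ms : ℕ → Measurement d) (E : ℕ → QEvent d) (i : ℕ) (K : Finset ℕ) : Prop :=
  condPrTest ρ n Ms (Function.update (fun k => (E k).compl) i (E i)) {i} K
    = PrTest ρ n Ms E {i}

/-- `NInd_{Σ,𝔼}(k|l)`: `NInd_Σ(E_k | E₁,…,E_j)` for all `1 ≤ j ≤ l`. -/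
def NIndSeq {d : ℕ} (ρ : Matrix (Fin d) (Fin d) ℂ) (n : ℕ)
    (Ms : ℕ → Measurement d) (E : ℕ → QEvent d) (k l : ℕ) : Prop :=
  ∀ j, 1 ≤ j → j ≤ l → NIndTest ρ n Ms E k (Finset.Icc 1 j)


/-!
Write `P m = Pr[Ē₁,…,Ē_m]`. Since `P m = Pr[Ē₁,…,Ē_m, E_{m+1}] + P (m + 1)`, the claim for all
earlier indices gives `P (k + 1) ≥ (1 - x (k + 1)) * P k`, hence
`P (i - 1) ≥ (∏_{s_i < j < i} (1 - x j)) * P s_i`. On the other hand, replacing the complements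
`Ē_{s_i+1},…,Ē_{i-1}` by complete events can only increase `Pr[Ē₁,…,Ē_{i-1}, E_i]`, and by
negative independence the resulting probability is `Pr[E_i] * P s_i`. The hypothesis on `Pr[E_i]`
joins the two bounds.
-/

section Recursion

variable {P N x : ℕ → ℝ}

lemma prod_one_sub_mul_le {s m : ℕ} (hsm : s ≤ m) (hx : ∀ k ∈ Finset.Ico s m, x (k + 1) ≤ 1)
    (hstep : ∀ k ∈ Finset.Ico s m, (1 - x (k + 1)) * P k ≤ P (k + 1)) :
    (∏ j ∈ Finset.Ioc s m, (1 - x j)) * P s ≤ P m := by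
  induction m, hsm using Nat.le_induction with
  | base => simp
  | succ m hsm ih =>
    have hk : m ∈ Finset.Ico s (m + 1) := Finset.mem_Ico.mpr ⟨hsm, m.lt_succ_self⟩
    have ih' := ih (fun k hk => hx k (Finset.Ico_subset_Ico_right m.le_succ hk))
      (fun k hk => hstep k (Finset.Ico_subset_Ico_right m.le_succ hk))
    calc (∏ j ∈ Finset.Ioc s (m + 1), (1 - x j)) * P s
        = (1 - x (m + 1)) * ((∏ j ∈ Finset.Ioc s m, (1 - x j)) * P s) := by
          rw [Finset.prod_Ioc_succ_top hsm]; ring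
      _ ≤ (1 - x (m + 1)) * P m := mul_le_mul_of_nonneg_left ih' (sub_nonneg.mpr (hx m hk))
      _ ≤ P (m + 1) := hstep m hk

/-- Here `P m` stands for `Pr[Ē₁,…,Ē_m]` and `N m` for `Pr[Ē₁,…,Ē_m, E_{m+1}]`. -/
lemma le_mul_of_le_mul_prod_one_sub {s : ℕ → ℕ} {n : ℕ}
    (hsplit : ∀ m < n, P m = N m + P (m + 1))
    (hx : ∀ m < n, 0 ≤ x (m + 1) ∧ x (m + 1) ≤ 1) (hs : ∀ m < n, s (m + 1) ≤ m)
    (hN : ∀ m < n,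
      N m ≤ x (m + 1) * (∏ j ∈ Finset.Ioc (s (m + 1)) m, (1 - x j)) * P (s (m + 1))) :
    ∀ m < n, N m ≤ x (m + 1) * P m := by
  intro m
  induction m using Nat.strong_induction_on with
  | _ m ih =>
    intro hmn
    have hprod : (∏ j ∈ Finset.Ioc (s (m + 1)) m, (1 - x j)) * P (s (m + 1)) ≤ P m :=
      prod_one_sub_mul_le (hs m hmn)
        (fun k hk => (hx k (by grind)).2)
        (fun k hk => by
          have hkm : k < m := (Finset.mem_Ico.mp hk).2
          have := ih k hkm (hkm.trans hmn)
          have := hsplit k (hkm.trans hmn)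
          linarith)
    calc N m
        ≤ x (m + 1) * (∏ j ∈ Finset.Ioc (s (m + 1)) m, (1 - x j)) * P (s (m + 1)) := hN m hmn
      _ ≤ x (m + 1) * P m := by
        rw [mul_assoc]; exact mul_le_mul_of_nonneg_left hprod (hx m hmn).1

end Recursion

section Sequences

variable {d : ℕ}

noncomputable def applySeq (σ : Matrix (Fin d) (Fin d) ℂ) (L : List (QEvent d)) :
    Matrix (Fin d) (Fin d) ℂ :=
  L.foldl (fun σ E => E.superop σ) σ

lemma QEvent.superop_posSemidef (F : QEvent d) {σ : Matrix (Fin d) (Fin d) ℂ}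
    (hσ : σ.PosSemidef) : (F.superop σ).PosSemidef :=
  Finset.sum_induction _ _ (fun _ _ ha hb => ha.add hb) Matrix.PosSemidef.zero
    fun _ _ => hσ.mul_mul_conjTranspose_same _

lemma applySeq_posSemidef {σ : Matrix (Fin d) (Fin d) ℂ} (hσ : σ.PosSemidef)
    (L : List (QEvent d)) : (applySeq σ L).PosSemidef := by
  induction L generalizing σ with
  | nil => exact hσ
  | cons F L ih => exact ih (F.superop_posSemidef hσ)

lemma PrSeq_nonneg {σ : Matrix (Fin d) (Fin d) ℂ} (hσ : σ.PosSemidef) (L : List (QEvent d)) :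
    0 ≤ PrSeq σ L :=
  (Complex.nonneg_iff.mp (applySeq_posSemidef hσ L).trace_nonneg).1

lemma QEvent.superop_add (F : QEvent d) (σ τ : Matrix (Fin d) (Fin d) ℂ) :
    F.superop (σ + τ) = F.superop σ + F.superop τ := by
  simp only [QEvent.superop, Matrix.mul_add, Matrix.add_mul, Finset.sum_add_distrib]

lemma applySeq_add (L : List (QEvent d)) (σ τ : Matrix (Fin d) (Fin d) ℂ) :
    applySeq (σ + τ) L = applySeq σ L + applySeq τ L := by
  induction L generalizing σ τ with
  | nil => rfl
  | cons F L ih => simp only [applySeq, List.foldl_cons, QEvent.superop_add] at ih ⊢; exact ih ..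

lemma PrSeq_add (σ τ : Matrix (Fin d) (Fin d) ℂ) (L : List (QEvent d)) :
    PrSeq (σ + τ) L = PrSeq σ L + PrSeq τ L := by
  simp only [PrSeq, ← applySeq.eq_def, applySeq_add, Matrix.trace_add, Complex.add_re]

lemma PrSeq_append (σ : Matrix (Fin d) (Fin d) ℂ) (L₁ L₂ : List (QEvent d)) :
    PrSeq σ (L₁ ++ L₂) = PrSeq (applySeq σ L₁) L₂ := by
  simp only [PrSeq, applySeq, List.foldl_append]

lemma PrSeq_cons (F : QEvent d) (σ : Matrix (Fin d) (Fin d) ℂ) (L : List (QEvent d)) :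
    PrSeq σ (F :: L) = PrSeq (F.superop σ) L := rfl

lemma QEvent.superop_completeEvent_meas (F : QEvent d) (σ : Matrix (Fin d) (Fin d) ℂ) :
    (completeEvent F.meas).superop σ = F.superop σ + F.compl.superop σ := by
  rw [add_comm]
  exact (Finset.sum_sdiff F.sub).symm

lemma trace_superop_completeEvent (M : Measurement d) (σ : Matrix (Fin d) (Fin d) ℂ) :
    ((completeEvent M).superop σ).trace = σ.trace := by
  calc ((completeEvent M).superop σ).trace
      = ∑ m ∈ M.spec, ((M.op m)ᴴ * M.op m * σ).trace := by
        rw [QEvent.superop, Matrix.trace_sum]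
        exact Finset.sum_congr rfl fun m _ => by rw [Matrix.trace_mul_cycle]; rfl
    _ = σ.trace := by rw [← Matrix.trace_sum, ← Finset.sum_mul, M.complete, Matrix.one_mul]

lemma PrSeq_eq_add_compl (σ : Matrix (Fin d) (Fin d) ℂ) (L : List (QEvent d)) (F : QEvent d) :
    PrSeq σ L = PrSeq σ (L ++ [F]) + PrSeq σ (L ++ [F.compl]) := by
  simp only [PrSeq_append, PrSeq_cons, ← PrSeq_add, ← F.superop_completeEvent_meas]
  simp [PrSeq, trace_superop_completeEvent, applySeq]

lemma PrSeq_compl_le_completeEvent {σ : Matrix (Fin d) (Fin d) ℂ} (hσ : σ.PosSemidef)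
    (A : List (QEvent d)) (F : QEvent d) (L : List (QEvent d)) :
    PrSeq σ (A ++ F.compl :: L) ≤ PrSeq σ (A ++ completeEvent F.meas :: L) := by
  simp only [PrSeq_append, PrSeq_cons, F.superop_completeEvent_meas, PrSeq_add,
    le_add_iff_nonneg_left]
  exact PrSeq_nonneg (F.superop_posSemidef (applySeq_posSemidef hσ A)) L

/-- Forgetting which outcome of a measurement occurred can only increase a probability. -/
lemma PrSeq_map_compl_le_map_completeEvent {σ : Matrix (Fin d) (Fin d) ℂ}
    (hσ : σ.PosSemidef) (A Fs L : List (QEvent d)) :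
    PrSeq σ (A ++ Fs.map QEvent.compl ++ L)
      ≤ PrSeq σ (A ++ Fs.map (fun F => completeEvent F.meas) ++ L) := by
  induction Fs generalizing A with
  | nil => rfl
  | cons F Fs ih =>
    calc PrSeq σ (A ++ (F :: Fs).map QEvent.compl ++ L)
        = PrSeq σ ((A ++ [F.compl]) ++ Fs.map QEvent.compl ++ L) := by simp
      _ ≤ PrSeq σ (A ++ F.compl :: (Fs.map (fun F => completeEvent F.meas) ++ L)) := by
        simpa using ih (A ++ [F.compl])
      _ ≤ PrSeq σ (A ++ completeEvent F.meas :: (Fs.map (fun F => completeEvent F.meas) ++ L)) :=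
        PrSeq_compl_le_completeEvent hσ _ _ _
      _ = PrSeq σ (A ++ (F :: Fs).map (fun F => completeEvent F.meas) ++ L) := by simp

end Sequences

section Tests

variable {d : ℕ}

noncomputable def complPrefix (E : ℕ → QEvent d) (m : ℕ) : List (QEvent d) :=
  (List.range' 1 m).map fun j => (E j).compl

lemma complPrefix_succ (E : ℕ → QEvent d) (m : ℕ) :
    complPrefix E (m + 1) = complPrefix E m ++ [(E (m + 1)).compl] := by
  simp [complPrefix, List.range'_concat, add_comm]

lemma complPrefix_eq_append {E : ℕ → QEvent d} {s m : ℕ} (hsm : s ≤ m) :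
    complPrefix E m
      = complPrefix E s ++ (List.range' (s + 1) (m - s)).map fun j => (E j).compl := by
  rw [complPrefix, complPrefix, ← List.map_append, add_comm, List.range'_append_1,
    Nat.add_sub_cancel' hsm]

variable (n : ℕ) (Ms : ℕ → Measurement d)

lemma testList_congr {G G' : ℕ → QEvent d} {K : Finset ℕ} (h : ∀ k ∈ K, G k = G' k) :
    testList n Ms G K = testList n Ms G' K := by
  refine List.map_congr_left fun k _ => ?_
  split_ifs with hk
  · exact h k hk
  · rfl

/-- `M` plays the role of `max K`, with the convention `max ∅ = 0`. -/
lemma testList_eq_map_range' (G : ℕ → QEvent d) {K : Finset ℕ} {M : ℕ}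
    (hM : ∀ i, 1 ≤ i → ((∃ k ∈ K, i ≤ k) ↔ i ≤ M)) (hMn : M ≤ n) :
    testList n Ms G K
      = (List.range' 1 M).map fun j => if j ∈ K then G j else completeEvent (Ms j) := by
  rw [testList, ← Nat.add_sub_cancel' hMn, ← List.range'_append_1, List.filter_append,
    List.filter_eq_self.mpr, List.filter_eq_nil_iff.mpr, List.append_nil] <;>
  · intro i hi
    rw [List.mem_range'_1] at hi
    simpa [hM i (by omega)] using by omega

lemma testList_Icc {E G : ℕ → QEvent d} {s : ℕ}
    (hG : ∀ j ∈ Finset.Icc 1 s, G j = (E j).compl) (hsn : s ≤ n) :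
    testList n Ms G (Finset.Icc 1 s) = complPrefix E s := by
  have hM : ∀ i, 1 ≤ i → ((∃ k ∈ Finset.Icc 1 s, i ≤ k) ↔ i ≤ s) := fun i hi =>
    ⟨fun ⟨k, hk, hik⟩ => hik.trans (Finset.mem_Icc.mp hk).2,
      fun h => ⟨s, Finset.mem_Icc.mpr ⟨hi.trans h, le_rfl⟩, h⟩⟩
  rw [testList_eq_map_range' n Ms G hM hsn]
  refine List.map_congr_left fun j hj => ?_
  rw [List.mem_range'_1] at hj
  have hj' : j ∈ Finset.Icc 1 s := Finset.mem_Icc.mpr (by omega)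
  rw [if_pos hj', hG j hj']

lemma range'_one_eq_append {s m : ℕ} (hsm : s ≤ m) :
    List.range' 1 (m + 1) = List.range' 1 s ++ List.range' (s + 1) (m - s) ++ [m + 1] := by
  rw [List.range'_concat, add_comm s 1, List.range'_append_1, Nat.add_sub_cancel' hsm]
  simp [add_comm]

lemma testList_Icc_union_singleton {E G : ℕ → QEvent d} {s m : ℕ}
    (hG : ∀ j ∈ Finset.Icc 1 s, G j = (E j).compl) (hsm : s ≤ m) (hmn : m < n) :
    testList n Ms G (Finset.Icc 1 s ∪ {m + 1})
      = complPrefix E s ++ (List.range' (s + 1) (m - s)).map (fun j => completeEvent (Ms j))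
        ++ [G (m + 1)] := by
  have hK : ∀ j, j ∈ Finset.Icc 1 s ∪ {m + 1} ↔ (1 ≤ j ∧ j ≤ s) ∨ j = m + 1 := by
    simp [or_comm]
  have hM : ∀ i, 1 ≤ i → ((∃ k ∈ Finset.Icc 1 s ∪ {m + 1}, i ≤ k) ↔ i ≤ m + 1) :=
    fun i _ => ⟨fun ⟨k, hk, hik⟩ => by rw [hK] at hk; omega, fun h => ⟨m + 1, by simp, h⟩⟩
  rw [testList_eq_map_range' n Ms G hM hmn, range'_one_eq_append hsm, List.map_append,
    List.map_append]
  congr 1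
  · congr 1
    · refine List.map_congr_left fun j hj => ?_
      rw [List.mem_range'_1] at hj
      have hj' : j ∈ Finset.Icc 1 s := Finset.mem_Icc.mpr (by omega)
      rw [if_pos (Finset.mem_union_left _ hj'), hG j hj']
    · refine List.map_congr_left fun j hj => ?_
      rw [List.mem_range'_1] at hj
      rw [if_neg (by rw [hK]; omega)]
  · simp

variable {ρ : Matrix (Fin d) (Fin d) ℂ}

lemma condPrTest_singleton_Icc {E G : ℕ → QEvent d} {s m : ℕ}
    (hG : ∀ j ∈ Finset.Icc 1 s, G j = (E j).compl) (hsm : s ≤ m) (hmn : m < n) :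
    condPrTest ρ n Ms G {m + 1} (Finset.Icc 1 s)
      = PrSeq ρ (complPrefix E s
          ++ (List.range' (s + 1) (m - s)).map (fun j => completeEvent (Ms j)) ++ [G (m + 1)])
        / PrSeq ρ (complPrefix E s) := by
  rw [condPrTest, PrTest, PrTest, testList_Icc_union_singleton n Ms hG hsm hmn,
    testList_Icc n Ms hG (hsm.trans hmn.le)]

lemma nIndTest_Icc_one_zero (hρ : ρ.trace = 1) (E : ℕ → QEvent d) (i : ℕ) :
    NIndTest ρ n Ms E i (Finset.Icc 1 0) := by
  have hG : ∀ k ∈ ({i} : Finset ℕ),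
      Function.update (fun k => (E k).compl) i (E i) k = E k := by
    simp
  simp only [NIndTest, condPrTest, Finset.Icc_eq_empty_of_lt zero_lt_one, Finset.empty_union,
    PrTest, testList_congr n Ms hG]
  simp [testList, PrSeq, hρ]

lemma sSup_nIndSeq (hρ : ρ.trace = 1) (E : ℕ → QEvent d) {i : ℕ} (hi : 1 ≤ i) :
    sSup {j : ℕ | 0 < j ∧ j < i ∧ NIndSeq ρ n Ms E i j} < i
      ∧ NIndTest ρ n Ms E i
          (Finset.Icc 1 (sSup {j : ℕ | 0 < j ∧ j < i ∧ NIndSeq ρ n Ms E i j})) := by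
  rcases Set.eq_empty_or_nonempty {j : ℕ | 0 < j ∧ j < i ∧ NIndSeq ρ n Ms E i j} with h | h
  · rw [h, csSup_empty]
    exact ⟨hi, nIndTest_Icc_one_zero n Ms hρ E i⟩
  · obtain ⟨hpos, hlt, hseq⟩ := Nat.sSup_mem h ⟨i, fun j hj => hj.2.1.le⟩
    exact ⟨hlt, hseq _ hpos le_rfl⟩

/-- Coarsen `Ē_{s+1},…,Ē_m` to complete events, then use negative independence to factor
out `Pr[Ē₁,…,Ē_s]`. -/
lemma PrSeq_complPrefix_append_le (hρ : ρ.PosSemidef) {E : ℕ → QEvent d}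
    (hE : ∀ k ∈ Finset.Icc 1 n, (E k).meas = Ms k) {s m : ℕ} (hsm : s ≤ m) (hmn : m < n)
    (hind : NIndTest ρ n Ms E (m + 1) (Finset.Icc 1 s))
    (hPs : PrSeq ρ (complPrefix E s) ≠ 0) :
    PrSeq ρ (complPrefix E m ++ [E (m + 1)])
      ≤ PrTest ρ n Ms E {m + 1} * PrSeq ρ (complPrefix E s) := by
  have hG : ∀ j ∈ Finset.Icc 1 s,
      Function.update (fun k => (E k).compl) (m + 1) (E (m + 1)) j = (E j).compl :=
    fun j hj => Function.update_of_ne (by grind) _ _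
  have hfactor := condPrTest_singleton_Icc (ρ := ρ) n Ms hG hsm hmn
  rw [hind, Function.update_self, eq_div_iff hPs] at hfactor
  set mid := (List.range' (s + 1) (m - s)).map E
  calc PrSeq ρ (complPrefix E m ++ [E (m + 1)])
      = PrSeq ρ (complPrefix E s ++ mid.map QEvent.compl ++ [E (m + 1)]) := by
        rw [complPrefix_eq_append hsm, List.map_map]; rfl
    _ ≤ PrSeq ρ (complPrefix E s ++ mid.map (fun F => completeEvent F.meas) ++ [E (m + 1)]) :=
        PrSeq_map_compl_le_map_completeEvent hρ _ _ _
    _ = PrTest ρ n Ms E {m + 1} * PrSeq ρ (complPrefix E s) := by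
        rw [hfactor, List.map_map]
        congr 3
        refine List.map_congr_left fun j hj => ?_
        rw [List.mem_range'_1] at hj
        simp [hE j (Finset.mem_Icc.mpr (by omega))]

lemma PrTest_compl_Ico (E : ℕ → QEvent d) {m : ℕ} (hmn : m ≤ n) :
    PrTest ρ n Ms (fun k => (E k).compl) (Finset.Ico 1 (m + 1))
      = PrSeq ρ (complPrefix E m) := by
  rw [PrTest, Finset.Ico_add_one_right_eq_Icc, testList_Icc n Ms (fun _ _ => rfl) hmn]

lemma condPrTest_update_Ico (E : ℕ → QEvent d) {m : ℕ} (hmn : m < n) :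
    condPrTest ρ n Ms (Function.update (fun k => (E k).compl) (m + 1) (E (m + 1))) {m + 1}
        (Finset.Ico 1 (m + 1))
      = PrSeq ρ (complPrefix E m ++ [E (m + 1)]) / PrSeq ρ (complPrefix E m) := by
  rw [Finset.Ico_add_one_right_eq_Icc,
    condPrTest_singleton_Icc n Ms (fun j hj => Function.update_of_ne (by grind) _ _) le_rfl hmn]
  simp

end Tests

/-- Key Lemma for the Quantum Lovász Local Lemma: with
`s_i = max{ j < i : NInd_{Σ,𝔼}(i|j) }` (`s_i = 0` if no such `j` exists, realized via
`sSup` on `ℕ`), if `Pr_Σ[E_i] ≤ x_i · ∏_{j=s_i+1}^{i−1}(1 − x_j)` for all `1 ≤ i ≤ n`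
and `Pr_Σ[Ē₁,…,Ē_{i−1}] ≠ 0` for each `1 ≤ i ≤ n`, then
`Pr_Σ[E_i | Ē₁,…,Ē_{i−1}] ≤ x_i` for every `1 ≤ i ≤ n`. -/
theorem qlll_key_lemma {d : ℕ} (ρ : Matrix (Fin d) (Fin d) ℂ) (hρ : IsDensityOp ρ)
    (n : ℕ) (Ms : ℕ → Measurement d) (E : ℕ → QEvent d)
    (hE : ∀ k ∈ Finset.Icc 1 n, (E k).meas = Ms k)
    (x : ℕ → ℝ) (hx : ∀ i ∈ Finset.Icc 1 n, x i ∈ Set.Ioc (0 : ℝ) 1)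
    (s : ℕ → ℕ)
    (hs : ∀ i ∈ Finset.Icc 1 n,
      s i = sSup {j : ℕ | 0 < j ∧ j < i ∧ NIndSeq ρ n Ms E i j})
    (hbound : ∀ i ∈ Finset.Icc 1 n,
      PrTest ρ n Ms E {i} ≤ x i * ∏ j ∈ Finset.Ioo (s i) i, (1 - x j))
    (hne : ∀ i ∈ Finset.Icc 1 n,
      PrTest ρ n Ms (fun k => (E k).compl) (Finset.Ico 1 i) ≠ 0) :
    ∀ i ∈ Finset.Icc 1 n,
      condPrTest ρ n Ms (Function.update (fun k => (E k).compl) i (E i)) {i}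
        (Finset.Ico 1 i) ≤ x i := by
  have hmem : ∀ k < n, k + 1 ∈ Finset.Icc 1 n :=
    fun k hk => Finset.mem_Icc.mpr ⟨le_add_self, hk⟩
  have hP : ∀ k < n, 0 < PrSeq ρ (complPrefix E k) := fun k hk =>
    (PrSeq_nonneg hρ.1 _).lt_of_ne' (PrTest_compl_Ico n Ms E hk.le ▸ hne (k + 1) (hmem k hk))
  have hsk : ∀ k < n,
      s (k + 1) ≤ k ∧ NIndTest ρ n Ms E (k + 1) (Finset.Icc 1 (s (k + 1))) := by
    intro k hk
    rw [hs (k + 1) (hmem k hk), Nat.le_iff_lt_add_one]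
    exact sSup_nIndSeq n Ms hρ.2 E le_add_self
  have hsplit : ∀ k < n, PrSeq ρ (complPrefix E k)
      = PrSeq ρ (complPrefix E k ++ [E (k + 1)]) + PrSeq ρ (complPrefix E (k + 1)) :=
    fun k _ => by rw [complPrefix_succ]; exact PrSeq_eq_add_compl ρ _ (E (k + 1))
  have hnum : ∀ k < n, PrSeq ρ (complPrefix E k ++ [E (k + 1)])
      ≤ x (k + 1) * (∏ j ∈ Finset.Ioc (s (k + 1)) k, (1 - x j))
          * PrSeq ρ (complPrefix E (s (k + 1))) := fun k hk => by
    obtain ⟨hsk, hind⟩ := hsk k hk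
    refine (PrSeq_complPrefix_append_le n Ms hρ.1 hE hsk hk hind
      (hP _ (hsk.trans_lt hk)).ne').trans ?_
    rw [← Finset.Ioo_add_one_right_eq_Ioc]
    exact mul_le_mul_of_nonneg_right (hbound (k + 1) (hmem k hk)) (PrSeq_nonneg hρ.1 _)
  have hN := le_mul_of_le_mul_prod_one_sub hsplit
    (fun k hk => (hx (k + 1) (hmem k hk)).imp le_of_lt id) (fun k hk => (hsk k hk).1) hnum
  intro i hi
  obtain ⟨m, rfl⟩ := Nat.exists_eq_add_of_le' (Finset.mem_Icc.mp hi).1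
  have hmn : m < n := (Finset.mem_Icc.mp hi).2
  rw [condPrTest_update_Ico n Ms E hmn, div_le_iff₀ (hP m hmn)]
  exact hN m hmn
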